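/- arXiv:2106.02309 — 3 statements merged into one kernel-verified Lean document; each statement's English description precedes it below -/
import Mathlib

section
/- Let L be a regular language, let A be its minimum DFA, and let B be any DFA with L(B) = L. Then the equivalence relation ∼^B refines ∼^A: for all α, α' ∈ Pref(L), if α ∼^B α' then α ∼^A α'. -/
/-- A deterministic finite automaton with a (possibly partial) transition function,
a unique initial state and a set of final states. -/
structure PDFA (α : Type*) (σ : Type*) where
  step : σ → α → Option σ
  start : σ
  accept : Set σ

namespace PDFA

variable {α : Type*} {σ : Type*}

/-- The transition function extended to strings (read left to right). -/
def evalFrom (M : PDFA α σ) : σ → List α → Option σ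
  | q, [] => some q
  | q, a :: w =>
    match M.step q a with
    | none => none
    | some q' => M.evalFrom q' w

/-- `δ(s, w)`. -/
def eval (M : PDFA α σ) (w : List α) : Option σ :=
  M.evalFrom M.start w

/-- The language accepted by the automaton. -/
def language (M : PDFA α σ) : Set (List α) :=
  {w | ∃ q, M.eval w = some q ∧ q ∈ M.accept}

/-- `Pref(L(M))`: the set of prefixes of accepted words. -/
def prefLang (M : PDFA α σ) : Set (List α) :=
  {w | ∃ v, w ++ v ∈ M.language}

/-- `I_q`: the words of `Pref(L(M))` reaching state `q`. -/
def I (M : PDFA α σ) (q : σ) : Set (List α) :=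
  {w | w ∈ M.prefLang ∧ M.eval w = some q}

/-- Every state is reachable from the initial state, and from every state a final
state can be reached. -/
def Trim (M : PDFA α σ) : Prop :=
  (∀ q : σ, ∃ w : List α, M.eval w = some q) ∧
  (∀ q : σ, ∃ w : List α, ∃ q' : σ, M.evalFrom q w = some q' ∧ q' ∈ M.accept)

variable [LinearOrder α]

/-- A sequence of words which is monotone (non-decreasing or non-increasing) in the
co-lexicographic order (i.e., lexicographic order of the reversed words). -/
def MonotoneColex (x : ℕ → List α) : Prop :=
  (∀ i j : ℕ, i ≤ j → (x i).reverse ≤ (x j).reverse) ∨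
  (∀ i j : ℕ, i ≤ j → (x j).reverse ≤ (x i).reverse)

/-- A set of states is entangled if a single monotone sequence of words of
`Pref(L(M))` reaches each of its states infinitely many times. -/
def EntangledStates (M : PDFA α σ) (S : Set σ) : Prop :=
  ∃ x : ℕ → List α, (∀ i, x i ∈ M.prefLang) ∧ MonotoneColex x ∧
    ∀ q ∈ S, ∀ n : ℕ, ∃ i : ℕ, n ≤ i ∧ M.eval (x i) = some q

/-- `ent(M)`: the maximum cardinality of an entangled set of states. -/
noncomputable def ent (M : PDFA α σ) [Fintype σ] : ℕ :=
  sSup {n : ℕ | ∃ S : Finset σ, S.card = n ∧ M.EntangledStates ↑S}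

/-- The strict co-lex partial order on states: `q₁ ≺ q₂` iff `q₁ ≠ q₂` and every word
reaching `q₁` is co-lexicographically smaller than every word reaching `q₂`. -/
def stateLt (M : PDFA α σ) (q₁ q₂ : σ) : Prop :=
  q₁ ≠ q₂ ∧ ∀ u ∈ M.I q₁, ∀ v ∈ M.I q₂, u.reverse < v.reverse

/-- A set of states which is an antichain for the co-lex partial order. -/
def IsColexAntichain (M : PDFA α σ) (S : Set σ) : Prop :=
  ∀ q₁ ∈ S, ∀ q₂ ∈ S, q₁ ≠ q₂ → ¬ M.stateLt q₁ q₂ ∧ ¬ M.stateLt q₂ q₁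

/-- `width(M)`: the maximum cardinality of a co-lex antichain of states. -/
noncomputable def width (M : PDFA α σ) [Fintype σ] : ℕ :=
  sSup {n : ℕ | ∃ S : Finset σ, S.card = n ∧ M.IsColexAntichain ↑S}

/-- `V` is convex in `(Pref(L(M)), ⪯)`. -/
def ConvexIn (M : PDFA α σ) (V : Set (List α)) : Prop :=
  ∀ ⦃u v w : List α⦄, u ∈ V → w ∈ V → v ∈ M.prefLang →
    u.reverse ≤ v.reverse → v.reverse ≤ w.reverse → v ∈ V

/-- A set of words `V` is entangled in `M` if some monotone sequence of elements of `V`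
passes through each state occurring in `V` infinitely many times. -/
def EntangledWords (M : PDFA α σ) (V : Set (List α)) : Prop :=
  ∃ x : ℕ → List α, (∀ i, x i ∈ V) ∧ MonotoneColex x ∧
    ∀ q : σ, (∃ w ∈ V, M.eval w = some q) →
      ∀ n : ℕ, ∃ i : ℕ, n ≤ i ∧ M.eval (x i) = some q

/-- An entangled convex (e.c.) decomposition of `M`: a partition of `Pref(L(M))` into
convex, entangled sets. -/
def IsECD (M : PDFA α σ) (V : Set (Set (List α))) : Prop :=
  (⋃₀ V) = M.prefLang ∧ V.Pairwise Disjoint ∧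
    ∀ W ∈ V, M.ConvexIn W ∧ M.EntangledWords W

/-- A minimum-size e.c. decomposition: a finite e.c. decomposition of minimum cardinality. -/
def IsMinECD (M : PDFA α σ) (V : Set (Set (List α))) : Prop :=
  V.Finite ∧ M.IsECD V ∧
    ∀ V' : Set (Set (List α)), V'.Finite → M.IsECD V' → V.ncard ≤ V'.ncard

/-- The equivalence relation `∼_𝒱`: two words are equivalent iff they reach the same state
and every element of `𝒱` lying strictly co-lexicographically between them intersects `I_q`. -/
def simV (M : PDFA α σ) (V : Set (Set (List α))) (u v : List α) : Prop :=
  M.eval u = M.eval v ∧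
  ∀ W ∈ V,
    (∀ w ∈ W, min u.reverse v.reverse < w.reverse ∧ w.reverse < max u.reverse v.reverse) →
    ∃ w ∈ W, M.eval w = M.eval u

/-- The decomposition-free characterization of `∼`: the two words reach the same state and
the co-lex interval between them is covered by finitely many convex sets, each entangled in
`M` and intersecting `I_q`. -/
def simR (M : PDFA α σ) (u v : List α) : Prop :=
  M.eval u = M.eval v ∧
  ∃ (n : ℕ) (C : Fin n → Set (List α)),
    (∀ i, C i ⊆ M.prefLang ∧ M.ConvexIn (C i) ∧ M.EntangledWords (C i) ∧
      ∃ w ∈ C i, M.eval w = M.eval u) ∧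
    ∀ w ∈ M.prefLang,
      min u.reverse v.reverse ≤ w.reverse → w.reverse ≤ max u.reverse v.reverse →
      w ∈ ⋃ i, C i

end PDFA

/-!
Minimality of `A` forces distinct states of `A` to have distinct futures: merging states with
equal futures yields a trim DFA for the same language, which cannot have fewer states. Hence two
prefixes reaching the same state of `B` have the same residual language, so they also reach the
same state of `A`. A witness of `∼^B` is then a witness of `∼^A`: convexity depends only on
`Pref(L)`, and a monotone sequence visiting every `B`-state of `C` infinitely often visits every
`A`-state of `C` infinitely often.
-/

theorem Option.Rel.map_eq {α β γ : Type*} {R : α → β → Prop} {f : α → γ} {g : β → γ}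
    {o : Option α} {o' : Option β} (h : Option.Rel R o o') (hfg : ∀ a b, R a b → f a = g b) :
    o.map f = o'.map g := by
  cases h with
  | some hab => exact congrArg Option.some (hfg _ _ hab)
  | none => rfl

namespace PDFA

variable {α σ τ : Type*}

def future (M : PDFA α σ) (q : σ) : Set (List α) :=
  {w | ∃ q', M.evalFrom q w = some q' ∧ q' ∈ M.accept}

theorem evalFrom_cons (M : PDFA α σ) (q : σ) (a : α) (w : List α) :
    M.evalFrom q (a :: w) = (M.step q a).bind (M.evalFrom · w) := by
  cases h : M.step q a <;> simp [evalFrom, h]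

theorem evalFrom_append (M : PDFA α σ) (q : σ) (u v : List α) :
    M.evalFrom q (u ++ v) = (M.evalFrom q u).bind (M.evalFrom · v) := by
  induction u generalizing q with
  | nil => rfl
  | cons a u ih => cases h : M.step q a <;> simp [evalFrom_cons, h, ih]

theorem append_mem_language {M : PDFA α σ} {w z : List α} :
    w ++ z ∈ M.language ↔ ∃ q, M.eval w = some q ∧ z ∈ M.future q := by
  simp only [language, future, eval, evalFrom_append, Option.bind_eq_some_iff,
    Set.mem_ofPred_eq]
  grind

theorem nil_mem_future {M : PDFA α σ} {q : σ} : [] ∈ M.future q ↔ q ∈ M.accept := by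
  simp [future, evalFrom]

theorem cons_mem_future {M : PDFA α σ} {q : σ} {a : α} {z : List α} :
    a :: z ∈ M.future q ↔ ∃ r, M.step q a = some r ∧ z ∈ M.future r := by
  cases h : M.step q a <;> simp [future, evalFrom, h]

theorem exists_eval_of_mem_prefLang {M : PDFA α σ} {w : List α} (h : w ∈ M.prefLang) :
    ∃ q, M.eval w = some q := by
  obtain ⟨z, hz⟩ := h
  obtain ⟨q, hq, -⟩ := append_mem_language.1 hz
  exact ⟨q, hq⟩

theorem residual_eq_future {M : PDFA α σ} {w : List α} {q : σ} (h : M.eval w = some q) :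
    {z | w ++ z ∈ M.language} = M.future q := by
  ext z
  simp [append_mem_language, h]

theorem residual_eq_of_eval_eq {M : PDFA α σ} {w w' : List α} (h : M.eval w = M.eval w') :
    {z | w ++ z ∈ M.language} = {z | w' ++ z ∈ M.language} := by
  ext z
  simp only [Set.mem_ofPred_eq, append_mem_language, h]

theorem prefLang_eq_of_language_eq {M : PDFA α σ} {N : PDFA α τ}
    (h : N.language = M.language) : N.prefLang = M.prefLang := by
  simp only [prefLang, h]

/-- Trimness rules out that only one of the two successors exists. -/
theorem rel_step_of_future_eq {M : PDFA α σ} (hM : M.Trim) {p p' : σ}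
    (h : M.future p = M.future p') (a : α) :
    Option.Rel (fun r r' => M.future r = M.future r') (M.step p a) (M.step p' a) := by
  have hnone : ∀ {q q'}, M.future q = M.future q' → M.step q a = none →
      M.step q' a = none := by
    intro q q' hqq' hq
    by_contra hq'
    obtain ⟨r', hr'⟩ := Option.ne_none_iff_exists'.1 hq'
    obtain ⟨w, s, hs, hacc⟩ := hM.2 r'
    have : a :: w ∈ M.future q := hqq' ▸ cons_mem_future.2 ⟨r', hr', s, hs, hacc⟩
    simp [cons_mem_future, hq] at this
  cases hp : M.step p a with
  | none => rw [hnone h hp]; exact .none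
  | some r =>
    obtain ⟨r', hr'⟩ : ∃ r', M.step p' a = some r' := Option.ne_none_iff_exists'.1 fun hp' => by
      simp [hnone h.symm hp'] at hp
    rw [hr']
    refine .some (Set.ext fun z => ?_)
    have hz := congrArg (a :: z ∈ ·) h
    simpa [cons_mem_future, hp, hr'] using hz

structure IsHom (M : PDFA α σ) (N : PDFA α τ) (f : σ → τ) : Prop where
  step : ∀ p a, N.step (f p) a = (M.step p a).map f
  start : N.start = f M.start
  accept : ∀ p, f p ∈ N.accept ↔ p ∈ M.accept

namespace IsHom

variable {M : PDFA α σ} {N : PDFA α τ} {f : σ → τ}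

theorem evalFrom (h : IsHom M N f) (p : σ) (w : List α) :
    N.evalFrom (f p) w = (M.evalFrom p w).map f := by
  induction w generalizing p with
  | nil => rfl
  | cons a w ih => cases hp : M.step p a <;> simp [evalFrom_cons, h.step, hp, ih]

theorem eval (h : IsHom M N f) (w : List α) : N.eval w = (M.eval w).map f := by
  rw [PDFA.eval, h.start]
  exact h.evalFrom M.start w

theorem language_eq (h : IsHom M N f) : N.language = M.language := by
  ext w
  simp only [language, Set.mem_ofPred_eq, h.eval, Option.map_eq_some_iff]
  constructor
  · rintro ⟨_, ⟨p, hp, rfl⟩, hacc⟩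
    exact ⟨p, hp, (h.accept p).1 hacc⟩
  · rintro ⟨p, hp, hacc⟩
    exact ⟨f p, ⟨p, hp, rfl⟩, (h.accept p).2 hacc⟩

theorem trim (h : IsHom M N f) (hf : Function.Surjective f) (hM : M.Trim) : N.Trim := by
  constructor
  · intro q
    obtain ⟨p, rfl⟩ := hf q
    obtain ⟨w, hw⟩ := hM.1 p
    exact ⟨w, by simp [h.eval, hw]⟩
  · intro q
    obtain ⟨p, rfl⟩ := hf q
    obtain ⟨w, p', hw, hacc⟩ := hM.2 p
    exact ⟨w, f p', by simp [h.evalFrom, hw], (h.accept p').2 hacc⟩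

end IsHom

def relabel (M : PDFA α σ) (e : σ ≃ τ) : PDFA α τ where
  step q a := (M.step (e.symm q) a).map e
  start := e M.start
  accept := e.symm ⁻¹' M.accept

theorem isHom_relabel (M : PDFA α σ) (e : σ ≃ τ) : IsHom M (M.relabel e) e :=
  ⟨fun p a => by simp [relabel], rfl, fun p => by simp [relabel]⟩

noncomputable def minimize (M : PDFA α σ) : PDFA α (Quotient (Setoid.ker M.future)) where
  step q a := (M.step q.out a).map (⟦·⟧)
  start := ⟦M.start⟧
  accept := {q | q.out ∈ M.accept}

theorem isHom_minimize {M : PDFA α σ} (hM : M.Trim) :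
    IsHom M M.minimize (⟦·⟧ : σ → Quotient (Setoid.ker M.future)) := by
  refine ⟨fun p a => ?_, rfl, fun p => ?_⟩
  · exact (rel_step_of_future_eq hM (Setoid.ker_apply_mk_out p) a).map_eq
      fun _ _ h => Quotient.sound h
  · change (⟦p⟧ : Quotient (Setoid.ker M.future)).out ∈ M.accept ↔ p ∈ M.accept
    rw [← nil_mem_future, ← nil_mem_future, Setoid.ker_apply_mk_out (f := M.future) p]

section Minimal

variable [Fintype σ] {A : PDFA α σ}
  (hmin : ∀ (m : ℕ) (D : PDFA α (Fin m)), D.Trim → D.language = A.language →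
    Fintype.card σ ≤ m)
include hmin

theorem card_le_of_language_eq [Fintype τ] {D : PDFA α τ} (hD : D.Trim)
    (hL : D.language = A.language) : Fintype.card σ ≤ Fintype.card τ :=
  let e := Fintype.equivFin τ
  hmin _ (D.relabel e) ((isHom_relabel D e).trim e.surjective hD)
    ((isHom_relabel D e).language_eq.trans hL)

theorem future_injective (hA : A.Trim) : Function.Injective A.future := by
  classical
  have hmk : Function.Surjective (⟦·⟧ : σ → Quotient (Setoid.ker A.future)) :=
    Quotient.mk_surjective
  have hcard := card_le_of_language_eq hmin ((isHom_minimize hA).trim hmk hA)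
    (isHom_minimize hA).language_eq
  have hinj := hmk.injective_of_finite
    (Fintype.equivOfCardEq (le_antisymm hcard (Fintype.card_le_of_surjective _ hmk)))
  exact fun p p' h => hinj (Quotient.sound h)

end Minimal

def StateRefines (N : PDFA α τ) (M : PDFA α σ) : Prop :=
  ∀ w ∈ M.prefLang, ∀ w' ∈ M.prefLang, N.eval w = N.eval w' → M.eval w = M.eval w'

theorem stateRefines_of_future_injective {M : PDFA α σ} {N : PDFA α τ}
    (hinj : Function.Injective M.future) (hL : N.language = M.language) : N.StateRefines M := by
  intro w hw w' hw' hN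
  obtain ⟨p, hp⟩ := exists_eval_of_mem_prefLang hw
  obtain ⟨p', hp'⟩ := exists_eval_of_mem_prefLang hw'
  have hres := residual_eq_of_eval_eq hN
  rw [hL, residual_eq_future hp, residual_eq_future hp'] at hres
  rw [hp, hp', hinj hres]

variable [LinearOrder α] {M : PDFA α σ} {N : PDFA α τ}

theorem convexIn_iff_of_prefLang_eq (h : N.prefLang = M.prefLang) {V : Set (List α)} :
    N.ConvexIn V ↔ M.ConvexIn V := by
  simp only [ConvexIn, h]

theorem EntangledWords.of_stateRefines (hNM : N.StateRefines M) {V : Set (List α)}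
    (hVM : V ⊆ M.prefLang) (hVN : V ⊆ N.prefLang) (h : N.EntangledWords V) :
    M.EntangledWords V := by
  obtain ⟨x, hxV, hmono, hvisit⟩ := h
  refine ⟨x, hxV, hmono, ?_⟩
  rintro q ⟨w, hwV, hwq⟩ n
  obtain ⟨r, hr⟩ := exists_eval_of_mem_prefLang (hVN hwV)
  obtain ⟨i, hni, hxi⟩ := hvisit r ⟨w, hwV, hr⟩ n
  exact ⟨i, hni, (hNM _ (hVM (hxV i)) _ (hVM hwV) (hxi.trans hr.symm)).trans hwq⟩

theorem StateRefines.simR (hNM : N.StateRefines M) (hpref : N.prefLang = M.prefLang)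
    {u v : List α} (hu : u ∈ M.prefLang) (hv : v ∈ M.prefLang) (h : N.simR u v) :
    M.simR u v := by
  obtain ⟨huv, n, C, hC, hcover⟩ := h
  refine ⟨hNM u hu v hv huv, n, C, fun i => ?_, hpref ▸ hcover⟩
  obtain ⟨hsubN, hconv, hent, w, hwC, hwu⟩ := hC i
  have hsubM : C i ⊆ M.prefLang := hpref ▸ hsubN
  exact ⟨hsubM, (convexIn_iff_of_prefLang_eq hpref).1 hconv,
    hent.of_stateRefines hNM hsubM hsubN, w, hwC, hNM w (hsubM hwC) u hu hwu⟩

end PDFA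

theorem simR_of_dfa_refines_simR_of_minimum_general {α : Type*} [LinearOrder α] {σ₁ σ₂ : Type*}
    [Fintype σ₁] (A : PDFA α σ₁) (hA : A.Trim)
    (hmin : ∀ (m : ℕ) (D : PDFA α (Fin m)), D.Trim → D.language = A.language →
      Fintype.card σ₁ ≤ m)
    (B : PDFA α σ₂) (hL : B.language = A.language) :
    ∀ u v : List α, u ∈ A.prefLang → v ∈ A.prefLang →
      B.simR u v → A.simR u v := fun _ _ hu hv =>
  (PDFA.stateRefines_of_future_injective (PDFA.future_injective hmin hA) hL).simR
    (PDFA.prefLang_eq_of_language_eq hL) hu hv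

/-- Lemma: if `A` is the minimum DFA of `L` and `B` any DFA recognizing `L`, then the
relation `∼^B` refines `∼^A`. -/
theorem simR_of_dfa_refines_simR_of_minimum {α : Type*} [LinearOrder α] {σ₁ σ₂ : Type*}
    [Fintype σ₁] [Fintype σ₂] (A : PDFA α σ₁) (hA : A.Trim)
    (hmin : ∀ (m : ℕ) (D : PDFA α (Fin m)), D.Trim → D.language = A.language →
      Fintype.card σ₁ ≤ m)
    (B : PDFA α σ₂) (hB : B.Trim) (hL : B.language = A.language) :
    ∀ u v : List α, u ∈ A.prefLang → v ∈ A.prefLang →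
      B.simR u v → A.simR u v :=
  simR_of_dfa_refines_simR_of_minimum_general A hA hmin B hL
end

section
/- Let A be an NFA with state set Q and let q_1, …, q_h be states of A. If there exist strings ν_1, …, ν_h ∈ Pref(L(A)) with ν_i ∈ I_{q_i} for every i and ν_1 ≺ ν_2 ≺ ⋯ ≺ ν_h in co-lex order, then there exist strings ν'_1, …, ν'_h ∈ Pref(L(A)) with ν'_i ∈ I_{q_i} for every i, ν'_1 ≺ ⋯ ≺ ν'_h, and |ν'_i| ≤ h − 2 + Σ_{t=1}^{h} |Q|^t for every i = 1, …, h. -/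
/-- A nondeterministic finite automaton with a unique initial state. -/
structure PNFA (α : Type*) (σ : Type*) where
  step : σ → α → Set σ
  start : σ
  accept : Set σ

namespace PNFA

variable {α : Type*} {σ : Type*}

/-- The transition function extended to strings, from a set of states. -/
def evalFrom (M : PNFA α σ) (S : Set σ) (w : List α) : Set σ :=
  w.foldl (fun T a => ⋃ q ∈ T, M.step q a) S

/-- `δ(s, w)`: the set of states reachable from the initial state reading `w`. -/
def eval (M : PNFA α σ) (w : List α) : Set σ :=
  M.evalFrom {M.start} w

/-- The language accepted by the automaton. -/
def language (M : PNFA α σ) : Set (List α) :=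
  {w | ∃ q ∈ M.eval w, q ∈ M.accept}

/-- `Pref(L(M))`: the set of prefixes of accepted words. -/
def prefLang (M : PNFA α σ) : Set (List α) :=
  {w | ∃ v, w ++ v ∈ M.language}

/-- `I_q`: the words of `Pref(L(M))` reaching state `q`. -/
def I (M : PNFA α σ) (q : σ) : Set (List α) :=
  {w | w ∈ M.prefLang ∧ q ∈ M.eval w}

/-- Every state is reachable from the initial state, and from every state a final state
can be reached. -/
def Trim (M : PNFA α σ) : Prop :=
  (∀ q : σ, ∃ w : List α, q ∈ M.eval w) ∧
  (∀ q : σ, ∃ w : List α, ∃ q' ∈ M.accept, q' ∈ M.evalFrom {q} w)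

end PNFA


/-!
Reverse the words, so that co-lex order becomes lexicographic order. If some reversed witness
`u` has length at least `N = Σ_{m=1}^{h} |Q|^m`, look at the prefixes `u.take t` for
`t ≤ |u|`: the indices `S t` of the witnesses extending `u.take t` form a decreasing chain of
nonempty sets, and each witness in `S t` passes through a state after reading all but its last
`t` letters. Since there are at most `N` pairs (set of the chain, states on it), two lengths
`t₁ < t₂` give the same set and the same states. Deleting the block between positions `t₁` and
`t₂` from every witness in that set keeps each witness reaching its state, keeps the order (the
deleted block is common to all words that could be compared through it), and shortens `u`.
Iterating bounds every witness by `N - 1`.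
-/

open Finset

namespace PNFA

variable {α σ : Type*} (M : PNFA α σ)

theorem evalFrom_append (S : Set σ) (u v : List α) :
    M.evalFrom S (u ++ v) = M.evalFrom (M.evalFrom S u) v := by
  simp only [evalFrom, List.foldl_append]

theorem mem_evalFrom_iff (S : Set σ) (w : List α) (q : σ) :
    q ∈ M.evalFrom S w ↔ ∃ p ∈ S, q ∈ M.evalFrom {p} w := by
  induction w generalizing S with
  | nil => simp [evalFrom]
  | cons a w ih =>
    have step : ∀ T : Set σ, q ∈ M.evalFrom T (a :: w) ↔
        ∃ p' ∈ ⋃ p ∈ T, M.step p a, q ∈ M.evalFrom {p'} w := fun T => ih _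
    simp only [step, Set.mem_iUnion, Set.mem_singleton_iff, exists_prop, exists_eq_left]
    exact ⟨fun ⟨p', ⟨i, hi, hp'⟩, hq⟩ => ⟨i, hi, p', hp', hq⟩,
      fun ⟨i, hi, p', hp', hq⟩ => ⟨p', ⟨i, hi, hp'⟩, hq⟩⟩

theorem mem_eval_append_iff {u v : List α} {q : σ} :
    q ∈ M.eval (u ++ v) ↔ ∃ p ∈ M.eval u, q ∈ M.evalFrom {p} v := by
  rw [eval, evalFrom_append, mem_evalFrom_iff]
  rfl

theorem Trim.mem_I_iff {M : PNFA α σ} (hM : M.Trim) {q : σ} {w : List α} :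
    w ∈ M.I q ↔ q ∈ M.eval w := by
  refine ⟨And.right, fun hq => ⟨?_, hq⟩⟩
  obtain ⟨v, f, hf, hv⟩ := hM.2 q
  exact ⟨v, f, M.mem_eval_append_iff.2 ⟨q, hq, hv⟩, hf⟩

end PNFA

namespace List

variable {α : Type*} [LinearOrder α]

theorem append_lt_append_left_iff (u : List α) {x y : List α} : u ++ x < u ++ y ↔ x < y := by
  induction u with
  | nil => rfl
  | cons a u ih => simpa [cons_lt_cons_iff] using ih

theorem append_lt_iff_of_not_prefix {u w : List α} (h : ¬u <+: w) (x : List α) :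
    u ++ x < w ↔ u < w := by
  induction u generalizing w with
  | nil => exact absurd nil_prefix h
  | cons a u ih =>
    cases w with
    | nil => simp
    | cons b w =>
      simp only [cons_append, cons_lt_cons_iff]
      by_cases hab : a = b
      · subst hab
        rw [ih fun hp => h (cons_prefix_cons.2 ⟨rfl, hp⟩)]
      · simp [hab]

theorem lt_append_iff_of_not_prefix {u w : List α} (h : ¬u <+: w) (x : List α) :
    w < u ++ x ↔ w < u := by
  induction u generalizing w with
  | nil => exact absurd nil_prefix h
  | cons a u ih =>
    cases w with
    | nil => simp
    | cons b w =>
      simp only [cons_append, cons_lt_cons_iff]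
      by_cases hab : b = a
      · subst hab
        rw [ih fun hp => h (cons_prefix_cons.2 ⟨rfl, hp⟩)]
      · simp [hab]

theorem strictMono_cut {ι : Type*} [Preorder ι] {r : ι → List α} (hr : StrictMono r)
    {p v : List α} (hpv : ∀ j, p <+: r j → p ++ v <+: r j) :
    StrictMono fun j => if p <+: r j then p ++ (r j).drop (p ++ v).length else r j := by
  have cut : ∀ j, p <+: r j →
      ∃ x, r j = p ++ (v ++ x) ∧ p ++ (r j).drop (p ++ v).length = p ++ x := by
    intro j hj
    obtain ⟨x, hx⟩ := hpv j hj
    exact ⟨x, by simp [← hx], by simp [← hx]⟩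
  intro a b hab
  have hlt := hr hab
  by_cases ha : p <+: r a <;> by_cases hb : p <+: r b <;> simp only [ha, hb, if_true, if_false]
  · obtain ⟨x, hx, hx'⟩ := cut a ha
    obtain ⟨y, hy, hy'⟩ := cut b hb
    rw [hx, hy, append_lt_append_left_iff, append_lt_append_left_iff] at hlt
    rw [hx', hy', append_lt_append_left_iff]
    exact hlt
  · obtain ⟨x, hx, hx'⟩ := cut a ha
    rw [hx, append_lt_iff_of_not_prefix hb] at hlt
    rwa [hx', append_lt_iff_of_not_prefix hb]
  · obtain ⟨y, hy, hy'⟩ := cut b hb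
    rw [hy, lt_append_iff_of_not_prefix ha] at hlt
    rwa [hy', lt_append_iff_of_not_prefix ha]
  · exact hlt

end List

theorem Antitone.exists_lt_eq_and_eqOn {ι β : Type*} [Fintype ι] [Fintype β]
    {S : ℕ → Finset ι} (hS : Antitone S) (G : ℕ → ι → β) {T : ℕ} (hT : (S T).Nonempty)
    (hcard : ∑ m ∈ Icc 1 (Fintype.card ι), Fintype.card β ^ m ≤ T) :
    ∃ t₁ t₂, t₁ < t₂ ∧ t₂ ≤ T ∧ S t₁ = S t₂ ∧ Set.EqOn (G t₁) (G t₂) (S t₁) := by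
  classical
  have eq_of_card_eq : ∀ t t', #(S t) = #(S t') → S t = S t' := fun t t' h =>
    (le_total t t').elim (fun htt' => (eq_of_subset_of_card_le (hS htt') h.le).symm)
      (fun htt' => eq_of_subset_of_card_le (hS htt') h.ge)
  have maps : ∀ t ∈ range (T + 1), #(S t) ∈ Icc 1 (Fintype.card ι) := fun t ht =>
    mem_Icc.2 ⟨(hT.mono (hS (by simpa [Nat.lt_succ_iff] using ht))).card_pos, card_le_univ _⟩
  -- Some cardinality `m` is taken by more than `|β| ^ m` lengths `t`, all with the same `S t`.
  obtain ⟨m, -, hm⟩ : ∃ m ∈ Icc 1 (Fintype.card ι),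
      Fintype.card β ^ m < #{t ∈ range (T + 1) | #(S t) = m} := by
    refine exists_lt_of_sum_lt ?_
    rw [← card_eq_sum_card_fiberwise maps, card_range]
    omega
  set F := {t ∈ range (T + 1) | #(S t) = m}
  obtain ⟨t₀, ht₀⟩ := card_pos.1 (lt_of_le_of_lt (Nat.zero_le _) hm)
  have hF : ∀ t ∈ F, S t = S t₀ := fun t ht =>
    eq_of_card_eq _ _ ((mem_filter.1 ht).2.trans (mem_filter.1 ht₀).2.symm)
  obtain ⟨t, ht, t', ht', hne, heq⟩ := exists_ne_map_eq_of_card_lt_of_maps_to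
    (s := F) (t := (univ : Finset (S t₀ → β))) (f := fun t (j : S t₀) => G t j)
    (by rwa [card_univ, Fintype.card_fun, Fintype.card_coe, (mem_filter.1 ht₀).2])
    (fun _ _ => mem_univ _)
  have hT' : ∀ t ∈ F, t ≤ T := fun t ht => Nat.lt_succ_iff.1 (mem_range.1 (mem_filter.1 ht).1)
  have agree : Set.EqOn (G t) (G t') (S t₀) := fun j hj => congrFun heq ⟨j, hj⟩
  rcases hne.lt_or_gt with hlt | hlt
  · exact ⟨t, t', hlt, hT' t' ht', (hF t ht).trans (hF t' ht').symm, hF t ht ▸ agree⟩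
  · exact ⟨t', t, hlt, hT' t ht, (hF t' ht').trans (hF t ht).symm, hF t' ht' ▸ agree.symm⟩

namespace PNFA

variable {α σ ι : Type*} [LinearOrder α] (M : PNFA α σ) [Fintype ι] [Preorder ι]

/-- Witnesses are kept reversed, so that co-lex order is the lexicographic order of `r`.
A state `s` as in `hpump` lets the run on `r j` skip the reversed block `v`. -/
theorem exists_shorter_witnesses_of_cut {q : ι → σ} {r : ι → List α} (hr : StrictMono r)
    (hrun : ∀ j, q j ∈ M.eval (r j).reverse) {p v : List α} (hv : v ≠ []) {i : ι}
    (hi : p <+: r i) (hpv : ∀ j, p <+: r j → p ++ v <+: r j)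
    (hpump : ∀ j, p <+: r j →
      ∃ s ∈ M.eval ((r j).drop (p ++ v).length).reverse, q j ∈ M.evalFrom {s} p.reverse) :
    ∃ r' : ι → List α, StrictMono r' ∧ (∀ j, q j ∈ M.eval (r' j).reverse) ∧
      ∑ j, (r' j).length < ∑ j, (r j).length := by
  classical
  have shorter : ∀ j, p <+: r j → (p ++ (r j).drop (p ++ v).length).length < (r j).length := by
    intro j hj
    have := (hpv j hj).length_le
    have := List.length_pos_iff.2 hv
    simp only [List.length_append, List.length_drop] at *
    omega
  refine ⟨fun j => if p <+: r j then p ++ (r j).drop (p ++ v).length else r j,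
    List.strictMono_cut hr hpv, fun j => ?_, sum_lt_sum (fun j _ => ?_) ⟨i, mem_univ i, ?_⟩⟩
  · by_cases hj : p <+: r j
    · simpa only [hj, if_true, List.reverse_append, mem_eval_append_iff] using hpump j hj
    · simpa only [hj, if_false] using hrun j
  · dsimp only
    split_ifs with hj
    exacts [(shorter j hj).le, le_rfl]
  · simpa only [hi, if_true] using shorter i hi

theorem exists_shorter_witnesses [Fintype σ] {q : ι → σ} {r : ι → List α} (hr : StrictMono r)
    (hrun : ∀ j, q j ∈ M.eval (r j).reverse) {i : ι}
    (hi : ∑ m ∈ Icc 1 (Fintype.card ι), Fintype.card σ ^ m ≤ (r i).length) :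
    ∃ r' : ι → List α, StrictMono r' ∧ (∀ j, q j ∈ M.eval (r' j).reverse) ∧
      ∑ j, (r' j).length < ∑ j, (r j).length := by
  classical
  set u := r i
  have split : ∀ t j, ∃ s ∈ M.eval ((r j).drop t).reverse,
      q j ∈ M.evalFrom {s} ((r j).take t).reverse := fun t j => by
    rw [← M.mem_eval_append_iff, ← List.reverse_append, List.take_append_drop]
    exact hrun j
  choose G hG using split
  let S t : Finset ι := {j | u.take t <+: r j}
  have hS : Antitone S := fun a b hab j => by
    simpa only [S, mem_filter, mem_univ, true_and] using (List.take_prefix_take_left hab).trans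
  obtain ⟨t₁, t₂, h12, h2, hSeq, hGeq⟩ := hS.exists_lt_eq_and_eqOn G (T := u.length)
    ⟨i, by simp [S, u]⟩ hi
  have hmemS : ∀ t j, j ∈ S t ↔ u.take t <+: r j := by simp [S]
  have hpv : u.take t₁ ++ (u.take t₂).drop t₁ = u.take t₂ := by
    conv_rhs => rw [← List.take_append_drop t₁ (u.take t₂), List.take_take, min_eq_left h12.le]
  refine M.exists_shorter_witnesses_of_cut hr hrun (v := (u.take t₂).drop t₁) ?_
    (List.take_prefix t₁ u) (fun j hj => ?_) (fun j hj => ?_)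
  · simp only [ne_eq, ← List.length_eq_zero_iff, List.length_drop, List.length_take]
    omega
  · rw [hpv, ← hmemS, ← hSeq, hmemS]
    exact hj
  · have hp : (r j).take t₁ = u.take t₁ := by
      rw [List.prefix_iff_eq_take.1 hj, List.length_take, min_eq_left (h12.trans_le h2).le]
    refine ⟨G t₂ j, ?_, ?_⟩
    · rw [hpv, List.length_take, min_eq_left h2]
      exact (hG t₂ j).1
    · rw [← hGeq ((hmemS t₁ j).2 hj), ← hp]
      exact (hG t₁ j).2

theorem exists_witnesses_length_lt [Fintype σ] {q : ι → σ} (r : ι → List α) (hr : StrictMono r)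
    (hrun : ∀ j, q j ∈ M.eval (r j).reverse) :
    ∃ r' : ι → List α, StrictMono r' ∧ (∀ j, q j ∈ M.eval (r' j).reverse) ∧
      ∀ j, (r' j).length < ∑ m ∈ Icc 1 (Fintype.card ι), Fintype.card σ ^ m := by
  induction hn : ∑ j, (r j).length using Nat.strong_induction_on generalizing r with
  | _ n ih =>
    by_cases hshort : ∀ j, (r j).length < ∑ m ∈ Icc 1 (Fintype.card ι), Fintype.card σ ^ m
    · exact ⟨r, hr, hrun, hshort⟩
    · push Not at hshort
      obtain ⟨i, hi⟩ := hshort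
      obtain ⟨r', hr', hrun', hlt⟩ := M.exists_shorter_witnesses hr hrun hi
      exact ih _ (hn ▸ hlt) r' hr' hrun' rfl

end PNFA

/-- Lemma: if states `q₁, …, q_h` of an NFA are reached by co-lexicographically strictly
increasing words `ν₁ ≺ ⋯ ≺ ν_h`, then they are reached by strictly increasing words of
length at most `h - 2 + Σ_{t=1}^{h} |Q|^t`. -/
theorem exists_short_increasing_witnesses {α σ : Type*} [LinearOrder α] [Fintype σ]
    (M : PNFA α σ) (hM : M.Trim) (h : ℕ) (q : Fin h → σ) (ν : Fin h → List α)
    (hν : ∀ i, ν i ∈ M.I (q i))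
    (hinc : ∀ i j : Fin h, i < j → (ν i).reverse < (ν j).reverse) :
    ∃ ν' : Fin h → List α,
      (∀ i, ν' i ∈ M.I (q i)) ∧
      (∀ i j : Fin h, i < j → (ν' i).reverse < (ν' j).reverse) ∧
      (∀ i, (ν' i).length ≤ h - 2 + ∑ t ∈ Finset.Icc 1 h, (Fintype.card σ) ^ t) := by
  obtain ⟨r, hr, hrun, hlen⟩ := M.exists_witnesses_length_lt (fun i => (ν i).reverse)
    (fun i j => hinc i j) (fun i => by simpa using (hν i).2)
  refine ⟨fun i => (r i).reverse, fun i => hM.mem_I_iff.2 (hrun i),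
    fun i j hij => by simpa using hr hij, fun i => ?_⟩
  have := hlen i
  rw [Fintype.card_fin] at this
  simp only [List.length_reverse]
  omega
end

section
/- Let L ⊆ Σ* be a language, P a partition of Pref(L), and ∼ a P-consistent, right-invariant equivalence relation on Pref(L). Then the relation (∼^cv)^r — the right-invariant refinement of the P-convex refinement of ∼ — is P-consistent, P-convex, and right-invariant. -/
/-- `Pref(L)`: the set of prefixes of words of `L`. -/
def PrefSet {α : Type*} (L : Set (List α)) : Set (List α) :=
  {w | ∃ v, w ++ v ∈ L}

/-- `r` is an equivalence relation on the set `S` of words. -/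
def IsEquivOn {α : Type*} (S : Set (List α)) (r : List α → List α → Prop) : Prop :=
  (∀ u v, r u v → u ∈ S ∧ v ∈ S) ∧ (∀ u ∈ S, r u u) ∧
  (∀ u v, r u v → r v u) ∧ (∀ u v w, r u v → r v w → r u w)

/-- `r` respects `Pref(L)`: equivalent words have the same right extensions inside `Pref(L)`. -/
def Respects {α : Type*} (L : Set (List α)) (r : List α → List α → Prop) : Prop :=
  ∀ u v φ, r u v → u ++ φ ∈ PrefSet L → v ++ φ ∈ PrefSet L

/-- `r` is right-invariant: it respects `Pref(L)` and is preserved under right extensions. -/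
def RightInvariant {α : Type*} (L : Set (List α)) (r : List α → List α → Prop) : Prop :=
  ∀ u v φ, r u v → u ++ φ ∈ PrefSet L →
    v ++ φ ∈ PrefSet L ∧ r (u ++ φ) (v ++ φ)

/-- `r` is `P`-consistent: equivalent words lie in the same element of the partition `P`. -/
def PConsistent {α : Type*} (P : Set (Set (List α))) (r : List α → List α → Prop) : Prop :=
  ∀ u v, r u v → ∀ U ∈ P, u ∈ U → v ∈ U

/-- `r` is `P`-convex: each class `[u]_r` is convex in `(U_u, ⪯)` for the co-lex order. -/
def PConvex {α : Type*} [LinearOrder α] (P : Set (Set (List α)))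
    (r : List α → List α → Prop) : Prop :=
  ∀ u v w, r u w → ∀ U ∈ P, u ∈ U → v ∈ U →
    min u.reverse w.reverse ≤ v.reverse → v.reverse ≤ max u.reverse w.reverse → r u v

/-- `P` is a partition of the set `S`. -/
def IsPartitionOf {α : Type*} (S : Set (List α)) (P : Set (Set (List α))) : Prop :=
  (∀ U ∈ P, U.Nonempty) ∧ (⋃₀ P = S) ∧ P.Pairwise Disjoint

/-- The `P`-convex refinement `∼^cv` of a `P`-consistent relation `∼`. -/
def cvRef {α : Type*} [LinearOrder α] (L : Set (List α)) (P : Set (Set (List α)))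
    (r : List α → List α → Prop) (u v : List α) : Prop :=
  r u v ∧ ∀ w ∈ PrefSet L, (∀ U ∈ P, u ∈ U → w ∈ U) →
    min u.reverse v.reverse < w.reverse → w.reverse < max u.reverse v.reverse → r u w

/-- The right-invariant refinement `∼^r` of a relation `∼` respecting `Pref(L)`. -/
def rRef {α : Type*} (L : Set (List α)) (r : List α → List α → Prop)
    (u v : List α) : Prop :=
  u ∈ PrefSet L ∧ v ∈ PrefSet L ∧ ∀ φ : List α, u ++ φ ∈ PrefSet L → r (u ++ φ) (v ++ φ)


/-!
Right extension by `φ` maps co-lex intervals to co-lex intervals, because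
`(u ++ φ).reverse = φ.reverse ++ u.reverse` and prefixing by `φ.reverse` is strictly monotone for
the lexicographic order. Hence if `v` lies between `u` and `w` in its block, `u ∼ v` by convexity
of `∼^cv`, right-invariance of `∼` gives `uφ ∼ vφ`, and `vφ` lies between `uφ` and `wφ`, so
`uφ ∼^cv vφ` is inherited from `uφ ∼^cv wφ`. Consistency and right-invariance of `(∼^cv)^r` are
formal.
-/

theorem List.strictMono_append_left {α : Type*} [LinearOrder α] (p : List α) :
    StrictMono (p ++ ·) :=
  fun _ _ h => List.append_left_lt h

theorem List.reverse_append_between {α : Type*} [LinearOrder α] {u v w : List α} (φ : List α)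
    (hmin : min u.reverse w.reverse ≤ v.reverse) (hmax : v.reverse ≤ max u.reverse w.reverse) :
    min (u ++ φ).reverse (w ++ φ).reverse ≤ (v ++ φ).reverse ∧
      (v ++ φ).reverse ≤ max (u ++ φ).reverse (w ++ φ).reverse := by
  have hmono := List.strictMono_append_left φ.reverse
  simp only [List.reverse_append]
  rw [← hmono.monotone.map_min, ← hmono.monotone.map_max, hmono.le_iff_le, hmono.le_iff_le]
  exact ⟨hmin, hmax⟩

theorem Set.Pairwise.mem_of_disjoint_of_mem {ι : Type*} {P : Set (Set ι)}
    (hP : P.Pairwise Disjoint) {U U' : Set ι} (hU : U ∈ P) (hU' : U' ∈ P) {u v : ι}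
    (hu : u ∈ U) (hv : v ∈ U) (hu' : u ∈ U') : v ∈ U' :=
  Set.PairwiseDisjoint.elim_set (f := id) hP hU hU' u hu hu' ▸ hv

section Refinements

variable {α : Type*} {L : Set (List α)} {P : Set (Set (List α))}

theorem rel_of_rRef {s : List α → List α → Prop} {u v : List α} (h : rRef L s u v) : s u v := by
  simpa using h.2.2 [] (by simpa using h.1)

theorem PConsistent.rRef {s : List α → List α → Prop} (hs : PConsistent P s) :
    PConsistent P (rRef L s) :=
  fun u v huv => hs u v (rel_of_rRef huv)

theorem rightInvariant_rRef {s : List α → List α → Prop} (hs : ∀ u v, s u v → v ∈ PrefSet L) :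
    RightInvariant L (rRef L s) := by
  intro u v φ ⟨_, _, hext⟩ hφ
  have hvφ : v ++ φ ∈ PrefSet L := hs _ _ (hext φ hφ)
  refine ⟨hvφ, hφ, hvφ, fun ψ hψ => ?_⟩
  simpa only [List.append_assoc] using hext (φ ++ ψ) (by rwa [← List.append_assoc])

variable [LinearOrder α] {r : List α → List α → Prop}

theorem PConsistent.cvRef (hr : PConsistent P r) : PConsistent P (cvRef L P r) :=
  fun u v huv => hr u v huv.1

theorem cvRef_of_between {u v w : List α} (hcv : cvRef L P r u w) (huv : r u v)
    (hmin : min u.reverse w.reverse ≤ v.reverse) (hmax : v.reverse ≤ max u.reverse w.reverse) :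
    cvRef L P r u v :=
  ⟨huv, fun x hx hxU h₁ h₂ => hcv.2 x hx hxU
    ((le_min (min_le_left _ _) hmin).trans_lt h₁) (h₂.trans_le (max_le (le_max_left _ _) hmax))⟩

theorem rel_of_cvRef_of_between {u v w : List α} (hu : r u u) (hcv : cvRef L P r u w)
    (hv : v ∈ PrefSet L) (hvU : ∀ U ∈ P, u ∈ U → v ∈ U)
    (hmin : min u.reverse w.reverse ≤ v.reverse) (hmax : v.reverse ≤ max u.reverse w.reverse) :
    r u v := by
  rcases eq_or_ne v u with rfl | hvu
  · exact hu
  rcases eq_or_ne v w with rfl | hvw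
  · exact hcv.1
  have hne : ∀ x ∈ ({u.reverse, w.reverse} : Set (List α)), x ≠ v.reverse := by
    rintro x (rfl | rfl)
    · exact List.reverse_injective.ne hvu.symm
    · exact List.reverse_injective.ne hvw.symm
  refine hcv.2 v hv hvU (hmin.lt_of_ne (hne _ ?_)) (hmax.lt_of_ne (hne _ ?_).symm)
  · rcases min_choice u.reverse w.reverse with h | h <;> simp [h]
  · rcases max_choice u.reverse w.reverse with h | h <;> simp [h]

theorem pConvex_rRef_cvRef (hdisj : P.Pairwise Disjoint) (hcover : ⋃₀ P ⊆ PrefSet L)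
    (hrefl : ∀ u ∈ PrefSet L, r u u) (hri : RightInvariant L r) :
    PConvex P (rRef L (cvRef L P r)) := by
  intro u v w ⟨hu, hw, hext⟩ U hU huU hvU hmin hmax
  have hv : v ∈ PrefSet L := hcover ⟨U, hU, hvU⟩
  have huv : r u v := rel_of_cvRef_of_between (hrefl u hu) (rel_of_rRef ⟨hu, hw, hext⟩) hv
    (fun _ hU' => hdisj.mem_of_disjoint_of_mem hU hU' huU hvU) hmin hmax
  refine ⟨hu, hv, fun φ hφ => ?_⟩
  obtain ⟨hmin', hmax'⟩ := List.reverse_append_between φ hmin hmax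
  exact cvRef_of_between (hext φ hφ) (hri u v φ huv hφ).2 hmin' hmax'

end Refinements

/-- Lemma: if `∼` is a `P`-consistent, right-invariant equivalence relation on `Pref(L)`,
then `(∼^cv)^r` is `P`-consistent, `P`-convex and right-invariant. -/
theorem cvRef_rRef_consistent_convex_rightInvariant {α : Type*} [LinearOrder α]
    (L : Set (List α)) (P : Set (Set (List α))) (hP : IsPartitionOf (PrefSet L) P)
    (r : List α → List α → Prop) (hr : IsEquivOn (PrefSet L) r)
    (hcons : PConsistent P r) (hri : RightInvariant L r) :
    PConsistent P (rRef L (cvRef L P r)) ∧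
    PConvex P (rRef L (cvRef L P r)) ∧
    RightInvariant L (rRef L (cvRef L P r)) := by
  obtain ⟨-, hcover, hdisj⟩ := hP
  obtain ⟨hdom, hrefl, -, -⟩ := hr
  exact ⟨hcons.cvRef.rRef, pConvex_rRef_cvRef hdisj hcover.subset hrefl hri,
    rightInvariant_rRef fun u v huv => (hdom u v huv.1).2⟩
end
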